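/- Let F be a field, N = a + b with a, b ≥ 0, and α = (n_1,…,n_k) a composition of N. Let P = P_α ≤ GL_N(F) and let P₀^H ≤ GL_N(F) be the subgroup of block diagonal matrices diag(u_1, u_2) with u_1 ∈ GL_a(F) and u_2 ∈ GL_b(F) both upper triangular. Let ℱ^α_{a,b} be the set of subgroups of GL_N(F) of the form σ P σ⁻¹, where σ is an N×N permutation matrix, which contain P₀^H. Then the map T ↦ σ_T P σ_T⁻¹ is a bijection from 𝒯^α_{a,b} onto ℱ^α_{a,b}. -/

import Mathlib

/-!
A conjugate `σ P_α σ⁻¹` is the set of invertible `g` with `g i j = 0` whenever `f j < f i`, where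
`f` is the block index composed with `σ⁻¹`. Transvections show that this set determines the
preorder of `f`, and that it contains `P₀^H` exactly when `f` is monotone on `[0, a)` and on
`[a, N)`. A monotone function on a finite chain is determined by the sizes of its fibres, so `f`
is determined by its fibre sizes on the two halves, which form a table `T`; and `σ_T`, the stable
sort of the positions by type `A`/`B`, turns the block index into exactly the function with
those fibres. Two functions with the same preorder and the same fibre sizes agree (sort both),
which gives injectivity.
-/

open scoped MatrixGroups Matrix

namespace Stmt1

variable (F : Type*) [Field F]

/-- Extension of a tuple `n : Fin k → ℕ` by zero to all of `ℕ`. -/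
def nExt {k : ℕ} (n : Fin k → ℕ) : ℕ → ℕ := fun i => if h : i < k then n ⟨i, h⟩ else 0

/-- Partial sums `ν_j = n 0 + ⋯ + n (j-1)`. -/
def psum {k : ℕ} (n : Fin k → ℕ) (j : ℕ) : ℕ := ∑ i ∈ Finset.range j, nExt n i

/-- Block index of a position `x` with respect to the composition `c` with `K` parts. -/
def blkIdxF (c : ℕ → ℕ) (K : ℕ) (x : ℕ) : ℕ :=
  ((Finset.range K).filter (fun j => (∑ i ∈ Finset.range (j + 1), c i) ≤ x)).card

/-- The standard parabolic `P_n ≤ GL_M(F)` (as a set): invertible block upper triangular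
matrices with diagonal blocks of sizes `n 0, …, n (k-1)`. -/
def PparGL (M : ℕ) {k : ℕ} (n : Fin k → ℕ) : Set (GL (Fin M) F) :=
  { g | ∀ i j : Fin M, blkIdxF (nExt n) k (j : ℕ) < blkIdxF (nExt n) k (i : ℕ) →
      g.val i j = 0 }

/-- Conjugation `σ S σ⁻¹` of a set of invertible matrices by the permutation matrix of `σ`;
recall `(σ p σ⁻¹) i j = p (σ⁻¹ i) (σ⁻¹ j)`. -/
def conjPerm {M : ℕ} (σ : Equiv.Perm (Fin M)) (S : Set (GL (Fin M) F)) :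
    Set (GL (Fin M) F) :=
  { g | ∃ p ∈ S, g.val = (p.val).submatrix σ.symm σ.symm }

/-- The group `P₀^H`: invertible matrices that are upper triangular and block diagonal with
respect to the decomposition `N = a + b`, i.e. `diag(u₁, u₂)` with `u₁ ∈ GL_a(F)`,
`u₂ ∈ GL_b(F)` upper triangular. -/
def P0HGL (M a : ℕ) : Set (GL (Fin M) F) :=
  { g | (∀ i j : Fin M, (j : ℕ) < (i : ℕ) → g.val i j = 0) ∧
        (∀ i j : Fin M, (i : ℕ) < a → a ≤ (j : ℕ) → g.val i j = 0) }

/-- The number of complete pairs of intervals `I_1^A, I_1^B, …` lying entirely before `x`. -/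
def blkPair {k : ℕ} (aT bT : Fin k → ℕ) (x : ℕ) : ℕ :=
  ((Finset.range k).filter (fun j => psum aT (j + 1) + psum bT (j + 1) ≤ x)).card

/-- Whether the position `x` lies in one of the intervals `I_j^B` of the table `(aT, bT)`. -/
def isBTab {k : ℕ} (aT bT : Fin k → ℕ) (x : ℕ) : Bool :=
  decide (psum aT (blkPair aT bT x + 1) + psum bT (blkPair aT bT x) ≤ x)

/-- The permutation `σ_T` attached to a table `T = (aT, bT)`: the unique permutation that is
order preserving from `I_j^A` onto `A_j` and from `I_j^B` onto `B_j` for every `j`; it is the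
inverse of the stable sorting permutation sorting positions according to whether they lie in
an `A`-interval or a `B`-interval. -/
noncomputable def sigmaTab (N : ℕ) {k : ℕ} (aT bT : Fin k → ℕ) : Equiv.Perm (Fin N) :=
  (Tuple.sort (fun x : Fin N => isBTab aT bT (x : ℕ)))⁻¹

open Finset

section Counting

variable {α β : Type*}

lemma card_filter_comp_equiv [Fintype α] (e : α ≃ α) (p : α → Prop) [DecidablePred p] :
    #{x | p (e x)} = #{x | p x} := by
  simp only [card_filter]
  exact e.sum_comp fun x => if p x then 1 else 0

lemma card_filter_fin_add {a b : ℕ} (p : Fin (a + b) → Prop) [DecidablePred p] :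
    #{x | p x} = #{x : Fin a | p (Fin.castAdd b x)} + #{x : Fin b | p (Fin.natAdd a x)} := by
  simp only [card_filter]
  exact Fin.sum_univ_add _

lemma card_filter_fin_val (M : ℕ) (p : ℕ → Prop) [DecidablePred p] :
    #{x : Fin M | p x} = #{x ∈ range M | p x} := by
  simp only [card_filter]
  exact Fin.sum_univ_eq_sum_range (fun x => if p x then 1 else 0) M

lemma card_filter_fin_eq_sub {M l u : ℕ} (hu : u ≤ M) (p : Fin M → Prop) [DecidablePred p]
    (hp : ∀ x : Fin M, p x ↔ l ≤ x ∧ (x : ℕ) < u) : #{x | p x} = u - l := by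
  have hrange : (range M).filter (fun x => l ≤ x ∧ x < u) = Ico l u := by
    ext x
    simp only [mem_filter, mem_range, mem_Ico]
    omega
  rw [filter_congr fun x _ => hp x, card_filter_fin_val M (fun x => l ≤ x ∧ x < u), hrange,
    Nat.card_Ico]

lemma card_filter_le_eq_of_card_fiber_eq [Fintype α] [LinearOrder β] {f g : α → β}
    (hfg : ∀ j, #{x | f x = j} = #{x | g x = j}) (j : β) :
    #{x | f x ≤ j} = #{x | g x ≤ j} := by
  set t := (univ.image f ∪ univ.image g).filter (· ≤ j)
  have hf : #{x | f x ≤ j} = #{x | f x ∈ t} := by congr 1; ext x; simp [t]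
  have hg : #{x | g x ≤ j} = #{x | g x ∈ t} := by congr 1; ext x; simp [t]
  rw [hf, hg, ← sum_card_fiberwise_eq_card_filter, ← sum_card_fiberwise_eq_card_filter]
  exact sum_congr rfl fun i _ => hfg i

theorem eq_of_monotone_of_card_fiber_eq [Fintype α] [LinearOrder α] [LinearOrder β]
    {f g : α → β} (hf : Monotone f) (hg : Monotone g)
    (hfg : ∀ j, #{x | f x = j} = #{x | g x = j}) : f = g := by
  have key : ∀ {f g : α → β}, Monotone f → Monotone g → (∀ j, #{x | f x = j} = #{x | g x = j}) →
      ∀ x, f x ≤ g x := by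
    intro f g hf hg hfg x
    -- if `g x < f x`, then `{f ≤ g x} ⊆ {· < x}` and `{· ≤ x} ⊆ {g ≤ g x}`, yet both have the
    -- same size
    by_contra! hlt
    have h1 : #{y | f y ≤ g x} ≤ #{y | y < x} :=
      card_le_card fun y hy => by
        simp only [mem_filter, mem_univ, true_and] at hy ⊢
        exact lt_of_not_ge fun hxy => (hlt.trans_le (hf hxy)).not_ge hy
    have h2 : #{y | y < x} < #{y | y ≤ x} :=
      card_lt_card <| (ssubset_iff_of_subset (monotone_filter_right _ fun _ _ => le_of_lt)).2
        ⟨x, by simp, by simp⟩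
    have h3 : #{y | y ≤ x} ≤ #{y | g y ≤ g x} :=
      card_le_card fun y hy => by
        simp only [mem_filter, mem_univ, true_and] at hy ⊢
        exact hg hy
    have h4 := card_filter_le_eq_of_card_fiber_eq hfg (g x)
    omega
  exact funext fun x => le_antisymm (key hf hg hfg x) (key hg hf (fun j => (hfg j).symm) x)

theorem eq_of_le_iff_le_of_card_fiber_eq {M : ℕ} [LinearOrder β] {f g : Fin M → β}
    (hfg : ∀ x y, f x ≤ f y ↔ g x ≤ g y) (hc : ∀ j, #{x | f x = j} = #{x | g x = j}) :
    f = g := by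
  have hg : Monotone (g ∘ Tuple.sort f) := fun x y hxy =>
    (hfg _ _).1 (Tuple.monotone_sort f hxy)
  have h := eq_of_monotone_of_card_fiber_eq (Tuple.monotone_sort f) hg fun j =>
    (card_filter_comp_equiv _ (f · = j)).trans
      ((hc j).trans (card_filter_comp_equiv _ (g · = j)).symm)
  funext x
  simpa using congrFun h ((Tuple.sort f).symm x)

lemma monotone_comp_sort_comp {M c : ℕ} [LinearOrder β] {f : Fin M → β} {ι : Fin c → Fin M}
    (hι : StrictMono ι) (hf : ∀ x y, f (Tuple.sort f (ι x)) = f (Tuple.sort f (ι y)))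
    {g : Fin M → ℕ} (hg : Monotone g) : Monotone (g ∘ Tuple.sort f ∘ ι) := by
  have hstab := (Tuple.eq_sort_iff.mp (rfl : Tuple.sort f = Tuple.sort f)).2
  intro x y hxy
  rcases hxy.eq_or_lt with rfl | hlt
  · exact le_rfl
  · exact hg (hstab _ _ (hι hlt) (hf x y)).le

end Counting

section BlockIndex

variable {k : ℕ} (m : Fin k → ℕ)

lemma nExt_of_lt {j : ℕ} (hj : j < k) : nExt m j = m ⟨j, hj⟩ := dif_pos hj

lemma nExt_of_le {j : ℕ} (hj : k ≤ j) : nExt m j = 0 := dif_neg hj.not_gt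

lemma psum_succ (j : ℕ) : psum m (j + 1) = psum m j + nExt m j := sum_range_succ _ _

lemma psum_mono : Monotone (psum m) := fun _ _ hij =>
  sum_le_sum_of_subset (range_subset_range.mpr hij)

lemma psum_of_le {j : ℕ} (hj : k ≤ j) : psum m j = psum m k :=
  (sum_subset (range_subset_range.mpr hj) fun i _ hi =>
    nExt_of_le m (by simpa using hi)).symm

lemma psum_le_psum (j : ℕ) : psum m j ≤ psum m k := by
  rcases le_total j k with h | h
  · exact psum_mono m h
  · exact (psum_of_le m h).le

lemma psum_eq_sum : psum m k = ∑ i, m i := by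
  rw [psum, sum_range fun i => nExt m i]
  exact sum_congr rfl fun i _ => nExt_of_lt m i.2

lemma blkIdxF_monotone (c : ℕ → ℕ) (K : ℕ) : Monotone (blkIdxF c K) := fun _ _ hxy =>
  card_le_card (monotone_filter_right _ fun _ _ h => h.trans hxy)

lemma blkIdxF_le (c : ℕ → ℕ) (K x : ℕ) : blkIdxF c K x ≤ K :=
  (card_filter_le _ _).trans (card_range K).le

lemma blkIdxF_le_iff {x : ℕ} (hx : x < psum m k) (j : ℕ) :
    blkIdxF (nExt m) k x ≤ j ↔ x < psum m (j + 1) := by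
  constructor
  · intro h
    by_contra! hle
    have hsub : range (j + 1) ⊆ (range k).filter (fun i => psum m (i + 1) ≤ x) := by
      intro i hi
      have hi' : psum m (i + 1) ≤ x := (psum_mono m (by simpa using hi)).trans hle
      refine mem_filter.2 ⟨mem_range.2 ?_, hi'⟩
      by_contra! hk
      rw [psum_of_le m (by omega)] at hi'
      exact hi'.not_gt hx
    have := card_le_card hsub
    rw [card_range] at this
    exact absurd (this.trans h) (by omega)
  · intro h
    refine (card_le_card fun i hi => mem_range.2 ?_).trans (card_range j).le
    by_contra! hji
    exact (mem_filter.1 hi).2.not_gt (h.trans_le (psum_mono m (by omega)))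

lemma blkIdxF_eq_iff {x : ℕ} (hx : x < psum m k) (j : ℕ) :
    blkIdxF (nExt m) k x = j ↔ psum m j ≤ x ∧ x < psum m (j + 1) := by
  rcases j with _ | j
  · rw [← Nat.le_zero, blkIdxF_le_iff m hx]
    simp [psum]
  · have h1 := blkIdxF_le_iff m hx j
    have h2 := blkIdxF_le_iff m hx (j + 1)
    constructor
    · intro h; constructor <;> omega
    · intro h; omega

def blockIndex (M : ℕ) (m : Fin k → ℕ) (x : Fin M) : ℕ := blkIdxF (nExt m) k x

lemma blockIndex_monotone (M : ℕ) : Monotone (blockIndex M m) := fun _ _ hxy =>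
  blkIdxF_monotone _ _ (Fin.le_def.1 hxy)

lemma card_blockIndex_eq {M : ℕ} (hM : ∑ i, m i = M) (j : ℕ) :
    #{x | blockIndex M m x = j} = nExt m j := by
  rw [← psum_eq_sum] at hM
  subst hM
  rw [card_filter_fin_eq_sub (psum_le_psum m (j + 1)) (blockIndex _ m · = j)
    fun x => blkIdxF_eq_iff m x.2 j, psum_succ]
  omega

lemma card_blockIndex_comp_perm_eq {M : ℕ} (hM : ∑ i, m i = M) (σ : Equiv.Perm (Fin M))
    (j : ℕ) : #{x | blockIndex M m (σ x) = j} = nExt m j :=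
  (card_filter_comp_equiv σ (blockIndex M m · = j)).trans (card_blockIndex_eq m hM j)

lemma card_filter_eq_sum_blockIndex {M : ℕ} (p : Fin M → Prop) [DecidablePred p] :
    #{x | p x} = ∑ j ∈ range (k + 1), #{x | blockIndex M m x = j ∧ p x} := by
  rw [card_eq_sum_card_fiberwise (f := blockIndex M m) (t := range (k + 1))
    fun x _ => mem_range.2 (Nat.lt_succ_of_le (blkIdxF_le _ _ _))]
  refine sum_congr rfl fun j _ => ?_
  rw [filter_filter]
  exact congrArg card (filter_congr fun _ _ => and_comm)

end BlockIndex

section IsBTab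

variable {k : ℕ} {n aT bT : Fin k → ℕ}

lemma nExt_add (hT : ∀ i, aT i + bT i = n i) (j : ℕ) : nExt aT j + nExt bT j = nExt n j := by
  unfold nExt
  split_ifs <;> simp [hT]

lemma psum_add (hT : ∀ i, aT i + bT i = n i) (j : ℕ) : psum aT j + psum bT j = psum n j := by
  simp only [psum, ← sum_add_distrib, nExt_add hT]

lemma blkPair_eq (hT : ∀ i, aT i + bT i = n i) (x : ℕ) :
    blkPair aT bT x = blkIdxF (nExt n) k x := by
  change #((range k).filter fun j => psum aT (j + 1) + psum bT (j + 1) ≤ x) =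
    #((range k).filter fun j => psum n (j + 1) ≤ x)
  simp only [psum_add hT]

lemma isBTab_iff (hT : ∀ i, aT i + bT i = n i) (x : ℕ) :
    isBTab aT bT x = true ↔
      psum n (blkIdxF (nExt n) k x) + nExt aT (blkIdxF (nExt n) k x) ≤ x := by
  rw [isBTab, decide_eq_true_iff, blkPair_eq hT, psum_succ, ← psum_add hT]
  omega

lemma card_isBTab_false_blockIndex {N : ℕ} (hT : ∀ i, aT i + bT i = n i)
    (hN : ∑ i, n i = N) (j : ℕ) :
    #{x : Fin N | blockIndex N n x = j ∧ isBTab aT bT x = false} = nExt aT j := by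
  rw [← psum_eq_sum] at hN
  subst hN
  have hj := nExt_add hT j
  have hle : psum n j + nExt aT j ≤ psum n k :=
    le_trans (by rw [psum_succ]; omega) (psum_le_psum n (j + 1))
  have key : ∀ x : Fin (psum n k), blockIndex _ n x = j ∧ isBTab aT bT x = false ↔
      psum n j ≤ x ∧ (x : ℕ) < psum n j + nExt aT j := by
    intro x
    have hblk := blkIdxF_eq_iff n x.2 j
    have hB := isBTab_iff hT x
    change blkIdxF (nExt n) k x = j ∧ _ ↔ _
    generalize blkIdxF (nExt n) k x = p at hblk hB
    have hs := psum_succ n j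
    rw [← Bool.not_eq_true, hB]
    constructor
    · rintro ⟨rfl, h⟩
      have := hblk.1 rfl
      omega
    · rintro ⟨h1, h2⟩
      obtain rfl : p = j := hblk.2 ⟨h1, by omega⟩
      exact ⟨rfl, by omega⟩
  rw [card_filter_fin_eq_sub hle _ key, Nat.add_sub_cancel_left]

lemma card_isBTab_true_blockIndex {N : ℕ} (hT : ∀ i, aT i + bT i = n i)
    (hN : ∑ i, n i = N) (j : ℕ) :
    #{x : Fin N | blockIndex N n x = j ∧ isBTab aT bT x = true} = nExt bT j := by
  have h := card_filter_add_card_filter_not (s := {x : Fin N | blockIndex N n x = j})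
    (fun x => isBTab aT bT x = false)
  simp only [filter_filter, Bool.not_eq_false, card_blockIndex_eq n hN] at h
  have := card_isBTab_false_blockIndex hT hN j
  have := nExt_add hT j
  omega

lemma card_isBTab_false {N a : ℕ} (hT : ∀ i, aT i + bT i = n i) (hN : ∑ i, n i = N)
    (ha : ∑ i, aT i = a) : #{x : Fin N | isBTab aT bT x = false} = a := by
  rw [card_filter_eq_sum_blockIndex n, ← ha, ← psum_eq_sum, ← psum_of_le aT k.le_succ]
  exact sum_congr rfl fun j _ => card_isBTab_false_blockIndex hT hN j

lemma card_isBTab_true {N b : ℕ} (hT : ∀ i, aT i + bT i = n i) (hN : ∑ i, n i = N)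
    (hb : ∑ i, bT i = b) : #{x : Fin N | isBTab aT bT x = true} = b := by
  rw [card_filter_eq_sum_blockIndex n, ← hb, ← psum_eq_sum, ← psum_of_le bT k.le_succ]
  exact sum_congr rfl fun j _ => card_isBTab_true_blockIndex hT hN j

end IsBTab

section SortTable

variable {a b k : ℕ} {n aT bT : Fin k → ℕ}

def tableIndex (a b : ℕ) (aT bT : Fin k → ℕ) : Fin (a + b) → ℕ :=
  Fin.append (blockIndex a aT) (blockIndex b bT)

lemma eq_blockIndex_of_monotone {M : ℕ} {m : Fin k → ℕ} (hM : ∑ i, m i = M) {g : Fin M → ℕ}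
    (hg : Monotone g) (hfib : ∀ j, #{x | g x = j} = nExt m j) : g = blockIndex M m :=
  eq_of_monotone_of_card_fiber_eq hg (blockIndex_monotone m M) fun j => by
    rw [hfib, card_blockIndex_eq m hM]

lemma isBTab_comp_sort (hT : ∀ i, aT i + bT i = n i) (hN : ∑ i, n i = a + b)
    (ha : ∑ i, aT i = a) (hb : ∑ i, bT i = b) :
    (fun x : Fin (a + b) => isBTab aT bT x) ∘ Tuple.sort (fun x : Fin (a + b) => isBTab aT bT x)
      = fun x : Fin (a + b) => decide (a ≤ (x : ℕ)) := by
  refine eq_of_monotone_of_card_fiber_eq (Tuple.monotone_sort _) (fun x y hxy => ?_) fun v => ?_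
  · simp only [Bool.le_iff_imp, decide_eq_true_eq]
    exact fun h => h.trans hxy
  rw [Function.comp_def, card_filter_comp_equiv _ (fun x : Fin (a + b) => isBTab aT bT x = v)]
  cases v
  · rw [card_isBTab_false hT hN ha, card_filter_fin_eq_sub (l := 0) (u := a) (by omega)] <;>
      simp
  · rw [card_isBTab_true hT hN hb, card_filter_fin_eq_sub (l := a) (u := a + b) le_rfl]
    · simp
    · exact fun x => by simp [x.2]

/-- Sorting is stable, so on each half `blockIndex ∘ sort` is monotone, with the fibre sizes
recorded by the table. -/
lemma blockIndex_comp_sort (hT : ∀ i, aT i + bT i = n i) (hN : ∑ i, n i = a + b)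
    (ha : ∑ i, aT i = a) (hb : ∑ i, bT i = b) :
    blockIndex (a + b) n ∘ Tuple.sort (fun x : Fin (a + b) => isBTab aT bT x)
      = tableIndex a b aT bT := by
  have hB := congrFun (isBTab_comp_sort hT hN ha hb)
  set s := Tuple.sort (fun x : Fin (a + b) => isBTab aT bT x)
  have hleft : ∀ x : Fin a, isBTab aT bT (s (Fin.castAdd b x)) = false := fun x => by
    rw [← Function.comp_apply (f := fun x : Fin (a + b) => isBTab aT bT x), hB]
    simp
  have hright : ∀ x : Fin b, isBTab aT bT (s (Fin.natAdd a x)) = true := fun x => by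
    simpa using hB (Fin.natAdd a x)
  rw [tableIndex, ← Fin.append_castAdd_natAdd (f := blockIndex (a + b) n ∘ s)]
  congr 1
  · refine eq_blockIndex_of_monotone ha (monotone_comp_sort_comp (Fin.strictMono_castAdd b)
      (fun x y => (hleft x).trans (hleft y).symm) (blockIndex_monotone n _)) fun j => ?_
    rw [← card_isBTab_false_blockIndex hT hN j,
      ← card_filter_comp_equiv s (fun y => blockIndex _ n y = j ∧ isBTab aT bT y = false),
      card_filter_fin_add]
    simp [hleft, hright]
  · refine eq_blockIndex_of_monotone hb (monotone_comp_sort_comp (Fin.strictMono_natAdd a)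
      (fun x y => (hright x).trans (hright y).symm) (blockIndex_monotone n _)) fun j => ?_
    rw [← card_isBTab_true_blockIndex hT hN j,
      ← card_filter_comp_equiv s (fun y => blockIndex _ n y = j ∧ isBTab aT bT y = true),
      card_filter_fin_add]
    simp [hleft, hright]

end SortTable

section TableIndex

variable {a b k : ℕ} {n : Fin k → ℕ}

lemma tableIndex_injective {aT bT aT' bT' : Fin k → ℕ} (ha : ∑ i, aT i = a)
    (hb : ∑ i, bT i = b) (ha' : ∑ i, aT' i = a) (hb' : ∑ i, bT' i = b)
    (h : tableIndex a b aT bT = tableIndex a b aT' bT') : aT = aT' ∧ bT = bT' := by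
  have hA : blockIndex a aT = blockIndex a aT' := funext fun x => by
    simpa [tableIndex] using congrFun h (Fin.castAdd b x)
  have hB : blockIndex b bT = blockIndex b bT' := funext fun x => by
    simpa [tableIndex] using congrFun h (Fin.natAdd a x)
  refine ⟨funext fun i => ?_, funext fun i => ?_⟩
  · have := card_blockIndex_eq aT ha i
    rw [hA, card_blockIndex_eq aT' ha' i, nExt_of_lt _ i.2, nExt_of_lt _ i.2] at this
    exact this.symm
  · have := card_blockIndex_eq bT hb i
    rw [hB, card_blockIndex_eq bT' hb' i, nExt_of_lt _ i.2, nExt_of_lt _ i.2] at this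
    exact this.symm

lemma eq_nExt_restrict_of_le_nExt {c : ℕ → ℕ} (hc : ∀ j, c j ≤ nExt n j) (j : ℕ) :
    c j = nExt (fun i : Fin k => c i) j := by
  by_cases hj : j < k
  · rw [nExt_of_lt _ hj]
  · have := hc j
    rw [nExt_of_le _ (not_lt.1 hj)] at this ⊢
    omega

lemma exists_tableIndex_eq (hN : ∑ i, n i = a + b) {f : Fin (a + b) → ℕ}
    (hA : Monotone (f ∘ Fin.castAdd b)) (hB : Monotone (f ∘ Fin.natAdd a))
    (hf : ∀ j, #{x | f x = j} = nExt n j) :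
    ∃ aT bT : Fin k → ℕ, (∀ i, aT i + bT i = n i) ∧ ∑ i, aT i = a ∧ ∑ i, bT i = b ∧
      tableIndex a b aT bT = f := by
  set cA := fun j => #{x : Fin a | f (Fin.castAdd b x) = j}
  set cB := fun j => #{x : Fin b | f (Fin.natAdd a x) = j}
  have hsplit : ∀ j, cA j + cB j = nExt n j := fun j => by rw [← hf j, card_filter_fin_add]
  have hT : ∀ i : Fin k, cA i + cB i = n i := fun i => by rw [hsplit, nExt_of_lt _ i.2]
  have hsumA : ∑ i : Fin k, cA i ≤ a := by
    rw [Fin.sum_univ_eq_sum_range cA k, sum_card_fiberwise_eq_card_filter]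
    exact (card_filter_le _ _).trans (by simp)
  have hsumB : ∑ i : Fin k, cB i ≤ b := by
    rw [Fin.sum_univ_eq_sum_range cB k, sum_card_fiberwise_eq_card_filter]
    exact (card_filter_le _ _).trans (by simp)
  have htot : ∑ i : Fin k, cA i + ∑ i : Fin k, cB i = a + b := by
    rw [← sum_add_distrib, ← hN]
    exact sum_congr rfl fun i _ => hT i
  have ha : ∑ i : Fin k, cA i = a := by omega
  have hb : ∑ i : Fin k, cB i = b := by omega
  refine ⟨fun i => cA i, fun i => cB i, hT, ha, hb, ?_⟩
  have hcA := eq_nExt_restrict_of_le_nExt (c := cA) fun j =>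
    (Nat.le_add_right _ _).trans (hsplit j).le
  have hcB := eq_nExt_restrict_of_le_nExt (c := cB) fun j =>
    (Nat.le_add_left _ _).trans (hsplit j).le
  rw [tableIndex, ← eq_blockIndex_of_monotone ha hA hcA, ← eq_blockIndex_of_monotone hb hB hcB]
  exact Fin.append_castAdd_natAdd

end TableIndex

section Parabolic

variable {M : ℕ}

def parabolicOf (f : Fin M → ℕ) : Set (GL (Fin M) F) :=
  {g | ∀ i j, f j < f i → g.val i j = 0}

lemma PparGL_eq_parabolicOf {k : ℕ} (n : Fin k → ℕ) :
    PparGL F M n = parabolicOf F (blockIndex M n) := rfl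

lemma conjPerm_parabolicOf (σ : Equiv.Perm (Fin M)) (f : Fin M → ℕ) :
    conjPerm F σ (parabolicOf F f) = parabolicOf F (f ∘ σ.symm) := by
  ext g
  constructor
  · rintro ⟨p, hp, hg⟩ i j hij
    rw [hg]
    exact hp _ _ hij
  · intro hg
    refine ⟨Units.map (Matrix.reindexRingEquiv F σ.symm).toMonoidHom g, fun i j hij => ?_, ?_⟩
    · simpa using hg (σ i) (σ j) (by simpa using hij)
    · ext i j
      simp

noncomputable def transvectionGL {i j : Fin M} (hij : i ≠ j) : GL (Fin M) F :=
  Matrix.GeneralLinearGroup.mkOfDetNeZero (Matrix.transvection i j 1)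
    (by rw [Matrix.det_transvection_of_ne i j hij]; exact one_ne_zero)

lemma transvectionGL_apply_of_ne {i j i' j' : Fin M} (hij : i ≠ j) (h : i' ≠ j') :
    (transvectionGL F hij).val i' j' = if i = i' ∧ j = j' then 1 else 0 := by
  simp [transvectionGL, Matrix.GeneralLinearGroup.mkOfDetNeZero, Matrix.transvection,
    Matrix.one_apply_ne h, Matrix.single_apply]

lemma transvectionGL_mem_parabolicOf_iff {f : Fin M → ℕ} {i j : Fin M} (hij : i ≠ j) :
    transvectionGL F hij ∈ parabolicOf F f ↔ f i ≤ f j := by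
  constructor
  · intro h
    by_contra! hlt
    simpa [transvectionGL_apply_of_ne F hij hij] using h i j hlt
  · intro h i' j' hlt
    have hne : i' ≠ j' := by rintro rfl; exact lt_irrefl _ hlt
    rw [transvectionGL_apply_of_ne F hij hne, if_neg]
    rintro ⟨rfl, rfl⟩
    omega

lemma le_iff_le_of_parabolicOf_eq {f g : Fin M → ℕ} (h : parabolicOf F f = parabolicOf F g)
    (x y : Fin M) : f x ≤ f y ↔ g x ≤ g y := by
  rcases eq_or_ne x y with rfl | hxy
  · simp
  · rw [← transvectionGL_mem_parabolicOf_iff F hxy, h, transvectionGL_mem_parabolicOf_iff]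

lemma transvectionGL_mem_P0HGL {a : ℕ} {i j : Fin M} (hij : i < j)
    (h : (j : ℕ) < a ∨ a ≤ (i : ℕ)) :
    transvectionGL F hij.ne ∈ P0HGL F M a := by
  refine ⟨fun i' j' hlt => ?_, fun i' j' hi hj => ?_⟩ <;>
  · rw [transvectionGL_apply_of_ne F hij.ne (by rintro rfl; omega), if_neg]
    rintro ⟨rfl, rfl⟩
    omega

lemma P0HGL_subset_parabolicOf_iff {a b : ℕ} (f : Fin (a + b) → ℕ) :
    P0HGL F (a + b) a ⊆ parabolicOf F f ↔
      Monotone (f ∘ Fin.castAdd b) ∧ Monotone (f ∘ Fin.natAdd a) := by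
  constructor
  · intro hsub
    refine ⟨fun x y hxy => ?_, fun x y hxy => ?_⟩ <;> rcases hxy.eq_or_lt with rfl | hlt
    · exact le_rfl
    · have hlt' := Fin.strictMono_castAdd b hlt
      exact (transvectionGL_mem_parabolicOf_iff F hlt'.ne).1
        (hsub (transvectionGL_mem_P0HGL F hlt' (Or.inl (by simp))))
    · exact le_rfl
    · have hlt' := Fin.strictMono_natAdd a hlt
      exact (transvectionGL_mem_parabolicOf_iff F hlt'.ne).1
        (hsub (transvectionGL_mem_P0HGL F hlt' (Or.inr (by simp))))
  · rintro ⟨hA, hB⟩ g ⟨hupper, hblock⟩ i j hlt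
    induction i using Fin.addCases with
    | left i =>
      induction j using Fin.addCases with
      | left j =>
        exact hupper _ _ (Fin.strictMono_castAdd b (lt_of_not_ge fun h => (hA h).not_gt hlt))
      | right j => exact hblock _ _ (by simp) (by simp)
    | right i =>
      induction j using Fin.addCases with
      | left j => exact hupper _ _ (Nat.lt_add_right _ j.2)
      | right j =>
        exact hupper _ _ (Fin.strictMono_natAdd a (lt_of_not_ge fun h => (hB h).not_gt hlt))

end Parabolic

section Main

variable {a b k : ℕ} {n aT bT : Fin k → ℕ}

lemma conjPerm_sigmaTab (hT : ∀ i, aT i + bT i = n i) (hN : ∑ i, n i = a + b)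
    (ha : ∑ i, aT i = a) (hb : ∑ i, bT i = b) :
    conjPerm F (sigmaTab (a + b) aT bT) (PparGL F (a + b) n) =
      parabolicOf F (tableIndex a b aT bT) := by
  rw [PparGL_eq_parabolicOf, conjPerm_parabolicOf, sigmaTab, Equiv.Perm.inv_def,
    Equiv.symm_symm, blockIndex_comp_sort hT hN ha hb]

lemma card_tableIndex_eq (hT : ∀ i, aT i + bT i = n i) (hN : ∑ i, n i = a + b)
    (ha : ∑ i, aT i = a) (hb : ∑ i, bT i = b) (j : ℕ) :
    #{x | tableIndex a b aT bT x = j} = nExt n j := by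
  rw [← blockIndex_comp_sort hT hN ha hb]
  exact card_blockIndex_comp_perm_eq n hN _ j

lemma P0HGL_subset_parabolicOf_tableIndex :
    P0HGL F (a + b) a ⊆ parabolicOf F (tableIndex a b aT bT) := by
  rw [P0HGL_subset_parabolicOf_iff]
  constructor <;> intro x y hxy <;> simpa [tableIndex] using blockIndex_monotone _ _ hxy

end Main

theorem stmt1 (N a b k : ℕ) (hab : a + b = N) (n : Fin k → ℕ)
    (hsum : ∑ i, n i = N) :
    Set.BijOn
      (fun T : (Fin k → ℕ) × (Fin k → ℕ) => conjPerm F (sigmaTab N T.1 T.2) (PparGL F N n))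
      { T | (∀ i, T.1 i + T.2 i = n i) ∧ (∑ i, T.1 i = a) ∧ (∑ i, T.2 i = b) }
      { S | (∃ σ : Equiv.Perm (Fin N), S = conjPerm F σ (PparGL F N n)) ∧
            P0HGL F N a ⊆ S } := by
  subst hab
  refine ⟨?_, ?_, ?_⟩
  · rintro ⟨aT, bT⟩ ⟨hT, ha, hb⟩
    refine ⟨⟨_, rfl⟩, ?_⟩
    dsimp only at hT ha hb ⊢
    rw [conjPerm_sigmaTab F hT hsum ha hb]
    exact P0HGL_subset_parabolicOf_tableIndex F
  · rintro ⟨aT, bT⟩ ⟨hT, ha, hb⟩ ⟨aT', bT'⟩ ⟨hT', ha', hb'⟩ h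
    simp only [conjPerm_sigmaTab F hT hsum ha hb, conjPerm_sigmaTab F hT' hsum ha' hb'] at h
    have := eq_of_le_iff_le_of_card_fiber_eq (le_iff_le_of_parabolicOf_eq F h) fun j => by
      rw [card_tableIndex_eq hT hsum ha hb, card_tableIndex_eq hT' hsum ha' hb']
    obtain ⟨rfl, rfl⟩ := tableIndex_injective ha hb ha' hb' this
    rfl
  · rintro S ⟨⟨σ, rfl⟩, hsub⟩
    rw [PparGL_eq_parabolicOf, conjPerm_parabolicOf, P0HGL_subset_parabolicOf_iff] at hsub
    obtain ⟨aT, bT, hT, ha, hb, hf⟩ := exists_tableIndex_eq hsum hsub.1 hsub.2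
      (card_blockIndex_comp_perm_eq n hsum σ.symm)
    refine ⟨(aT, bT), ⟨hT, ha, hb⟩, ?_⟩
    dsimp only
    rw [conjPerm_sigmaTab F hT hsum ha hb, hf, PparGL_eq_parabolicOf, conjPerm_parabolicOf]

end Stmt1
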